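/- Let $T \geq 1$, let $K_1, \ldots, K_T$ be $H \times H$ real positive semidefinite matrices such that $\bar{K} := \sum_{t=1}^T K_t$ is positive definite, and let $\beta, \gamma > 0$. Then with $D = H$ there exist a real $H \times D$ matrix $L$ and $D \times D$ real positive semidefinite matrices $M_1, \ldots, M_T$ with $L M_t L^{\top} = K_t$ for all $t$ and $\gamma \sum_{t=1}^T \mathrm{tr}(M_t) + \beta \|L\|_F^2 = 2\sqrt{\beta\gamma}\,\mathrm{tr}(\bar{K}^{1/2})$. -/

import Mathlib

open Matrix

/-- The (unique) positive semidefinite square root of a real positive semidefinite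
matrix (junk value `0` if the matrix is not positive semidefinite). -/
noncomputable def psdSqrt {n : ℕ} (A : Matrix (Fin n) (Fin n) ℝ) : Matrix (Fin n) (Fin n) ℝ :=
  letI := Classical.propDecidable A.PosSemidef
  if h : A.PosSemidef then
    h.1.eigenvectorUnitary.1 * diagonal (Real.sqrt ∘ h.1.eigenvalues) *
      (star h.1.eigenvectorUnitary : Matrix (Fin n) (Fin n) ℝ) else 0

lemma psdSqrt_psd {n : ℕ} {A : Matrix (Fin n) (Fin n) ℝ} (hA : A.PosSemidef) :
    (psdSqrt A).PosSemidef := by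
  rw [psdSqrt, dif_pos hA]
  have hD : (diagonal (Real.sqrt ∘ hA.1.eigenvalues)).PosSemidef :=
    posSemidef_diagonal_iff.mpr fun i => Real.sqrt_nonneg _
  have := hD.mul_mul_conjTranspose_same (hA.1.eigenvectorUnitary.1)
  simpa [star_eq_conjTranspose] using this

lemma psdSqrt_mul_self {n : ℕ} {A : Matrix (Fin n) (Fin n) ℝ} (hA : A.PosSemidef) :
    psdSqrt A * psdSqrt A = A := by
  rw [psdSqrt, dif_pos hA]
  set U := hA.1.eigenvectorUnitary with hU
  have hUU : (star U : Matrix (Fin n) (Fin n) ℝ) * U.1 = 1 :=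
    Unitary.star_mul_self_of_mem U.2
  have hspec := hA.1.spectral_theorem
  have hDD : diagonal (Real.sqrt ∘ hA.1.eigenvalues) * diagonal (Real.sqrt ∘ hA.1.eigenvalues)
      = diagonal (RCLike.ofReal ∘ hA.1.eigenvalues) := by
    rw [diagonal_mul_diagonal]
    congr 1
    funext i
    simp [Real.mul_self_sqrt (hA.eigenvalues_nonneg i)]
  calc U.1 * diagonal (Real.sqrt ∘ hA.1.eigenvalues) * (star U : Matrix (Fin n) (Fin n) ℝ) *
        (U.1 * diagonal (Real.sqrt ∘ hA.1.eigenvalues) * (star U : Matrix (Fin n) (Fin n) ℝ))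
      = U.1 * (diagonal (Real.sqrt ∘ hA.1.eigenvalues) * ((star U : Matrix (Fin n) (Fin n) ℝ) *
        U.1) * diagonal (Real.sqrt ∘ hA.1.eigenvalues)) * (star U : Matrix (Fin n) (Fin n) ℝ) := by
        simp only [Matrix.mul_assoc]
    _ = A := by
        rw [hUU, Matrix.mul_one, hDD]
        conv_rhs => rw [hspec]
        simp [Unitary.conjStarAlgAut_apply, hU]

lemma psd_smul {n : ℕ} {A : Matrix (Fin n) (Fin n) ℝ} (hA : A.PosSemidef) {c : ℝ}
    (hc : 0 ≤ c) : (c • A).PosSemidef := by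
  have h := hA.mul_mul_conjTranspose_same (Real.sqrt c • (1 : Matrix (Fin n) (Fin n) ℝ))
  have he : (Real.sqrt c • (1 : Matrix (Fin n) (Fin n) ℝ)) * A *
      (Real.sqrt c • (1 : Matrix (Fin n) (Fin n) ℝ))ᴴ = c • A := by
    simp [Matrix.smul_mul, Matrix.mul_smul, smul_smul, Real.mul_self_sqrt hc]
  rwa [he] at h

/-- Attainment direction of Proposition 1: if `∑ t, K t` is positive definite there exist
`L` and positive semidefinite `M t` with `L * M t * Lᵀ = K t` achieving the value
`2 √(βγ) tr((∑ t, K t)^{1/2})`. -/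
theorem stmt_1 {H T : ℕ} (hT : 1 ≤ T)
    (K : Fin T → Matrix (Fin H) (Fin H) ℝ)
    (hK : ∀ t, (K t).PosSemidef)
    (hKbar : (∑ t, K t).PosDef)
    (β γ : ℝ) (hβ : 0 < β) (hγ : 0 < γ) :
    ∃ (L : Matrix (Fin H) (Fin H) ℝ) (M : Fin T → Matrix (Fin H) (Fin H) ℝ),
      (∀ t, (M t).PosSemidef) ∧ (∀ t, L * M t * Lᵀ = K t) ∧
      γ * ∑ t, (M t).trace + β * (L * Lᵀ).trace
        = 2 * Real.sqrt (β * γ) * (psdSqrt (∑ t, K t)).trace := by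
  classical
  set A := ∑ t, K t with hAdef
  have hApsd : A.PosSemidef := hKbar.posSemidef
  set S := psdSqrt A with hSdef
  have hSpsd : S.PosSemidef := psdSqrt_psd hApsd
  set R := psdSqrt S with hRdef
  have hRpsd : R.PosSemidef := psdSqrt_psd hSpsd
  have hSS : S * S = A := psdSqrt_mul_self hApsd
  have hRR : R * R = S := psdSqrt_mul_self hSpsd
  -- determinants
  have hdetA : (0 : ℝ) < A.det := hKbar.det_pos
  have hdetS : S.det ≠ 0 := by
    intro h
    rw [← hSS, det_mul, h, mul_zero] at hdetA
    exact lt_irrefl _ hdetA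
  have hdetR : R.det ≠ 0 := by
    intro h
    apply hdetS
    rw [← hRR, det_mul, h, mul_zero]
  have huR : IsUnit R.det := isUnit_iff_ne_zero.mpr hdetR
  -- symmetry facts
  have hRt : Rᵀ = R := by
    rw [← conjTranspose_eq_transpose_of_trivial]
    exact hRpsd.1
  have hRit : (R⁻¹)ᴴ = R⁻¹ := by
    rw [conjTranspose_nonsing_inv, hRpsd.1]
  -- scalar
  set a : ℝ := Real.sqrt (Real.sqrt (γ / β)) with hadef
  have hgb : (0 : ℝ) < γ / β := div_pos hγ hβ
  have ha2 : a * a = Real.sqrt (γ / β) := Real.mul_self_sqrt (Real.sqrt_nonneg _)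
  have ha2' : a * a = Real.sqrt γ / Real.sqrt β := by
    rw [ha2, Real.sqrt_div hγ.le]
  have hapos : 0 < a := by
    rw [hadef]
    exact Real.sqrt_pos.mpr (Real.sqrt_pos.mpr hgb)
  have ha2pos : 0 < a * a := mul_pos hapos hapos
  -- the witnesses
  refine ⟨a • R, fun t => (a * a)⁻¹ • (R⁻¹ * K t * R⁻¹), ?_, ?_, ?_⟩
  · intro t
    apply psd_smul _ (inv_nonneg.mpr ha2pos.le)
    have := (hK t).mul_mul_conjTranspose_same R⁻¹
    rwa [hRit] at this
  · intro t
    have h1 : R * (R⁻¹ * K t * R⁻¹) * R = K t := by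
      rw [Matrix.mul_assoc R⁻¹ (K t) R⁻¹, Matrix.mul_nonsing_inv_cancel_left _ _ huR,
        Matrix.nonsing_inv_mul_cancel_right _ _ huR]
    simp only [transpose_smul, hRt, Matrix.smul_mul, Matrix.mul_smul, smul_smul]
    rw [h1]
    nth_rewrite 2 [← one_smul ℝ (K t)]
    congr 1
    field_simp
  · -- the value
    have hpsdA : psdSqrt A = S := by
      rfl
    have hsum : ∑ t, ((a * a)⁻¹ • (R⁻¹ * K t * R⁻¹)).trace
        = (a * a)⁻¹ * S.trace := by
      have hM : ∑ t, (a * a)⁻¹ • (R⁻¹ * K t * R⁻¹)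
          = (a * a)⁻¹ • (R⁻¹ * A * R⁻¹) := by
        rw [hAdef, Finset.mul_sum, Finset.sum_mul, Finset.smul_sum]
      have hRAR : R⁻¹ * A * R⁻¹ = S := by
        have hA4 : A = R * ((R * R) * R) := by
          rw [← hSS, ← hRR]; noncomm_ring
        rw [hA4, Matrix.nonsing_inv_mul_cancel_left _ _ huR,
          Matrix.mul_nonsing_inv_cancel_right _ _ huR, hRR]
      rw [← trace_sum, hM, hRAR, trace_smul, smul_eq_mul]
    have hLL : ((a • R) * (a • R)ᵀ).trace = (a * a) * S.trace := by
      rw [transpose_smul, hRt, smul_mul, Matrix.mul_smul, smul_smul, hRR,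
        trace_smul, smul_eq_mul]
    rw [hsum, hLL]
    -- pure real arithmetic
    have hsb : Real.sqrt β * Real.sqrt β = β := Real.mul_self_sqrt hβ.le
    have hsg : Real.sqrt γ * Real.sqrt γ = γ := Real.mul_self_sqrt hγ.le
    have hsbpos : 0 < Real.sqrt β := Real.sqrt_pos.mpr hβ
    have hsgpos : 0 < Real.sqrt γ := Real.sqrt_pos.mpr hγ
    rw [Real.sqrt_mul hβ.le, ha2']
    set sb := Real.sqrt β
    set sg := Real.sqrt γ
    rw [← hsb, ← hsg]
    field_simp
    ring
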